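/- arXiv:1201.4708 — 3 statements merged into one kernel-verified Lean document; each statement's English description precedes it below -/
import Mathlib

section
/- Let n ≥ 1 and let f : ℝⁿ → ℝ be continuously differentiable. Then there is a constant C, depending only on n, such that for all distinct points x, y ∈ ℝⁿ, setting δ = |x − y|, one has |f(x) − f(y)| ≤ C · |x − y| · (M_δ(|∇f|)(x) + M_δ(|∇f|)(y)), where M_δ g(z) = sup over 0 < t ≤ δ of the average of |g| over the ball B(z, t). -/
open MeasureTheory Metric

open Set AffineMap Module

/-! Let `B` be the ball of radius `|x - y| / 2` about the midpoint of `x` and `y`, and let `z` be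
`x` or `y`. By the fundamental theorem of calculus on the segments `[z, w]`,
`|f z - ⨍_B f| ≤ ⨍_B |f z - f w| dw ≤ |x - y| ∫₀¹ ⨍_B |∇f| (z + s (w - z)) dw ds`.
The homothety of centre `z` and ratio `s` turns the inner average into an average over a ball
of radius `s |x - y| / 2` contained in `B(z, s |x - y|)`, hence it is at most
`2ⁿ M_δ(|∇f|)(z)`. -/

section MaximalFunction

variable {X : Type*} [MetricSpace X] [MeasurableSpace X]

-- The paper's `M_δ g` is `localMaximalFunction μ δ |g|`; we only apply it to `g ≥ 0`.
noncomputable def localMaximalFunction (μ : Measure X) (δ : ℝ) (g : X → ℝ) (z : X) : ℝ :=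
  ⨆ t ∈ Ioc (0 : ℝ) δ, ⨍ w in ball z t, g w ∂μ

variable [ProperSpace X] [OpensMeasurableSpace X] {μ : Measure X} [μ.IsOpenPosMeasure]
  [IsFiniteMeasureOnCompacts μ]

theorem setAverage_ball_le_localMaximalFunction {g : X → ℝ} (hg : Continuous g) (z : X)
    {δ t : ℝ} (ht : t ∈ Ioc 0 δ) :
    ⨍ w in ball z t, g w ∂μ ≤ localMaximalFunction μ δ g z := by
  obtain ⟨C, hC⟩ := (isCompact_closedBall z δ).exists_bound_of_continuousOn hg.continuousOn
  have hbound : ∀ r ∈ Ioc 0 δ, ⨍ w in ball z r, g w ∂μ ≤ C := by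
    intro r hr
    obtain ⟨x, hx, hle⟩ := exists_setAverage_le (measure_ball_pos μ z hr.1).ne'
      measure_ball_lt_top.ne (hg.continuousOn.integrableOn_compact
        (isCompact_closedBall z r) |>.mono_set ball_subset_closedBall)
    exact hle.trans ((le_abs_self _).trans
      (hC x (closedBall_subset_closedBall hr.2 (ball_subset_closedBall hx))))
  refine le_ciSup₂ (f := fun r (_ : r ∈ Ioc 0 δ) => ⨍ w in ball z r, g w ∂μ) ⟨C, ?_⟩
    t ht
  simp only [upperBounds, mem_iUnion, mem_range, forall_exists_index]
  rintro _ r hr rfl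
  exact hbound r hr

end MaximalFunction

section Averages

variable {F : Type*} [NormedAddCommGroup F] [NormedSpace ℝ F]

variable {X : Type*} [MeasurableSpace X] {ν : Measure X}

theorem average_mono_of_nonneg {f g : X → ℝ} (hf : 0 ≤ᵐ[ν] f) (hg : Integrable g ν)
    (hfg : f ≤ᵐ[ν] g) : ⨍ x, f x ∂ν ≤ ⨍ x, g x ∂ν := by
  rw [average_eq, average_eq]
  exact smul_le_smul_of_nonneg_left (integral_mono_of_nonneg hf hg hfg) (by positivity)

variable [IsFiniteMeasure ν] [NeZero ν]

theorem norm_sub_average_le [CompleteSpace F] {f : X → F} (hf : Integrable f ν) (c : F) :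
    ‖c - ⨍ x, f x ∂ν‖ ≤ ⨍ x, ‖c - f x‖ ∂ν := by
  have hc : (ν univ)⁻¹ ≠ ⊤ := ENNReal.inv_ne_top.2 (NeZero.ne (ν univ))
  rw [average_eq', average_eq']
  calc ‖c - ∫ x, f x ∂(ν univ)⁻¹ • ν‖
      = ‖∫ x, (c - f x) ∂(ν univ)⁻¹ • ν‖ := by
        rw [integral_sub (integrable_const c) (hf.smul_measure hc), integral_const,
          probReal_univ, one_smul]
    _ ≤ ∫ x, ‖c - f x‖ ∂(ν univ)⁻¹ • ν := norm_integral_le_integral_norm _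

theorem average_intervalIntegral_comm {G : X → ℝ → F} {a b : ℝ} (hab : a ≤ b)
    (hG : Integrable (Function.uncurry G) (ν.prod (volume.restrict (Ioc a b)))) :
    ⨍ x, (∫ s in a..b, G x s) ∂ν = ∫ s in a..b, ⨍ x, G x s ∂ν := by
  have hc : (ν univ)⁻¹ ≠ ⊤ := ENNReal.inv_ne_top.2 (NeZero.ne (ν univ))
  simp only [average_eq', intervalIntegral.integral_of_le hab]
  refine integral_integral_swap ?_
  rw [Measure.prod_smul_left]
  exact hG.smul_measure hc

end Averages

theorem norm_sub_le_integral_norm_fderiv_mul {E F : Type*} [NormedAddCommGroup E]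
    [NormedSpace ℝ E] [NormedAddCommGroup F] [NormedSpace ℝ F] [CompleteSpace F] {f : E → F}
    (hf : ContDiff ℝ 1 f) (z w : E) :
    ‖f w - f z‖ ≤ (∫ s in (0 : ℝ)..1, ‖fderiv ℝ f (homothety z s w)‖) * ‖w - z‖ := by
  simp only [homothety_eq_lineMap]
  have hderiv : ∀ s : ℝ, HasDerivAt (fun s => f (lineMap z w s))
      (fderiv ℝ f (lineMap z w s) (w - z)) s := fun s =>
    (hf.differentiable one_ne_zero _).hasFDerivAt.comp_hasDerivAt s hasDerivAt_lineMap
  have hcont : Continuous fun s : ℝ => fderiv ℝ f (lineMap z w s) :=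
    (hf.continuous_fderiv one_ne_zero).comp lineMap_continuous
  have hcont' : Continuous fun s : ℝ => fderiv ℝ f (lineMap z w s) (w - z) :=
    hcont.clm_apply continuous_const
  calc ‖f w - f z‖ = ‖∫ s in (0 : ℝ)..1, fderiv ℝ f (lineMap z w s) (w - z)‖ := by
        rw [intervalIntegral.integral_eq_sub_of_hasDerivAt (fun s _ => hderiv s)
          (hcont'.intervalIntegrable 0 1), lineMap_apply_one, lineMap_apply_zero]
    _ ≤ ∫ s in (0 : ℝ)..1, ‖fderiv ℝ f (lineMap z w s) (w - z)‖ :=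
        intervalIntegral.norm_integral_le_integral_norm zero_le_one
    _ ≤ ∫ s in (0 : ℝ)..1, ‖fderiv ℝ f (lineMap z w s)‖ * ‖w - z‖ :=
        intervalIntegral.integral_mono_on zero_le_one (hcont'.norm.intervalIntegrable 0 1)
          ((hcont.norm.mul continuous_const).intervalIntegrable 0 1)
          fun s _ => ContinuousLinearMap.le_opNorm _ _
    _ = (∫ s in (0 : ℝ)..1, ‖fderiv ℝ f (lineMap z w s)‖) * ‖w - z‖ :=
        intervalIntegral.integral_mul_const _ _

theorem preimage_homothety_ball {E : Type*} [SeminormedAddCommGroup E] [NormedSpace ℝ E]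
    (z m : E) {s : ℝ} (hs : 0 < s) (r : ℝ) :
    homothety z s ⁻¹' ball (homothety z s m) (s * r) = ball m r := by
  ext w
  simp [homothety_apply, dist_eq_norm, ← smul_sub, norm_smul, abs_of_pos hs, hs]

section AddHaar

variable {E : Type*} [NormedAddCommGroup E] [NormedSpace ℝ E] [FiniteDimensional ℝ E]
  [MeasurableSpace E] [BorelSpace E] {μ : Measure E} [μ.IsAddHaarMeasure]

theorem setAverage_ball_le_two_pow_mul {g : E → ℝ} (hg0 : 0 ≤ g) {z c : E} {ρ : ℝ}
    (hg : IntegrableOn g (ball z (2 * ρ)) μ) (hρ : 0 < ρ) (hc : dist c z ≤ ρ) :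
    ⨍ w in ball c ρ, g w ∂μ ≤ 2 ^ finrank ℝ E * ⨍ w in ball z (2 * ρ), g w ∂μ := by
  have hsub : ball c ρ ⊆ ball z (2 * ρ) := ball_subset_ball' (by linarith)
  have hvol : μ.real (ball z (2 * ρ)) = 2 ^ finrank ℝ E * μ.real (ball c ρ) := by
    rw [measureReal_def, measureReal_def, Measure.addHaar_ball_mul_of_pos μ z two_pos,
      Measure.addHaar_ball_center μ c, ENNReal.toReal_mul, ENNReal.toReal_ofReal (by positivity)]
  have hpos : 0 < μ.real (ball c ρ) :=
    ENNReal.toReal_pos (measure_ball_pos μ c hρ).ne' measure_ball_lt_top.ne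
  rw [setAverage_eq, setAverage_eq, hvol, smul_eq_mul, smul_eq_mul, mul_inv, mul_assoc,
    mul_inv_cancel_left₀ (by positivity)]
  exact mul_le_mul_of_nonneg_left (setIntegral_mono_set hg (.of_forall hg0) hsub.eventuallyLE)
    (by positivity)

theorem map_homothety_addHaar (z : E) {s : ℝ} (hs : s ≠ 0) :
    Measure.map (homothety z s) μ = ENNReal.ofReal |s ^ finrank ℝ E|⁻¹ • μ := by
  ext A hA
  have hpre : homothety z s ⁻¹' A = homothety z s⁻¹ '' A := by
    ext w
    constructor
    · intro hw
      exact ⟨_, hw, by simp [← homothety_mul_apply, hs]⟩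
    · rintro ⟨x, hx, rfl⟩
      simpa [← homothety_mul_apply, hs] using hx
  rw [Measure.map_apply (homothety_continuous z s).measurable hA, hpre,
    Measure.addHaar_image_homothety, Measure.smul_apply, smul_eq_mul, inv_pow, abs_inv]

theorem setAverage_comp_homothety (z : E) {s : ℝ} (hs : s ≠ 0) {S : Set E}
    (hS : MeasurableSet S) {g : E → ℝ} (hg : Continuous g) :
    ⨍ w in homothety z s ⁻¹' S, g (homothety z s w) ∂μ = ⨍ u in S, g u ∂μ := by
  have hmeas := (homothety_continuous z s).measurable
  have hc : (ENNReal.ofReal |s ^ finrank ℝ E|⁻¹).toReal ≠ 0 := by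
    rw [ENNReal.toReal_ofReal (by positivity)]; positivity
  rw [setAverage_eq, setAverage_eq,
    ← setIntegral_map hS hg.aestronglyMeasurable hmeas.aemeasurable, measureReal_def,
    ← Measure.map_apply hmeas hS, map_homothety_addHaar z hs, Measure.restrict_smul,
    integral_smul_measure]
  simp only [Measure.smul_apply, smul_eq_mul, ENNReal.toReal_mul, measureReal_def]
  field_simp

theorem setAverage_comp_homothety_le_localMaximalFunction {g : E → ℝ} (hg : Continuous g)
    (hg0 : 0 ≤ g) {z m : E} {ρ s : ℝ} (hρ : 0 < ρ) (hm : dist m z ≤ ρ)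
    (hs : s ∈ Ioc 0 1) :
    ⨍ w in ball m ρ, g (homothety z s w) ∂μ ≤
      2 ^ finrank ℝ E * localMaximalFunction μ (2 * ρ) g z := by
  have hdist : dist (homothety z s m) z ≤ s * ρ := by
    rw [dist_homothety_center, Real.norm_eq_abs, abs_of_pos hs.1]
    exact mul_le_mul_of_nonneg_left (dist_comm z m ▸ hm) hs.1.le
  rw [← preimage_homothety_ball z m hs.1 ρ,
    setAverage_comp_homothety z hs.1.ne' measurableSet_ball hg]
  calc ⨍ u in ball (homothety z s m) (s * ρ), g u ∂μ
      ≤ 2 ^ finrank ℝ E * ⨍ u in ball z (2 * (s * ρ)), g u ∂μ :=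
        setAverage_ball_le_two_pow_mul hg0 (hg.continuousOn.integrableOn_compact
          (isCompact_closedBall _ _) |>.mono_set ball_subset_closedBall)
          (by positivity [hs.1]) hdist
    _ ≤ 2 ^ finrank ℝ E * localMaximalFunction μ (2 * ρ) g z := by
        gcongr
        exact setAverage_ball_le_localMaximalFunction hg z
          ⟨by positivity [hs.1], by nlinarith [hs.1, hs.2]⟩

theorem setAverage_intervalIntegral_comp_homothety_le_localMaximalFunction {g : E → ℝ}
    (hg : Continuous g) (hg0 : 0 ≤ g) {z m : E} {ρ : ℝ} (hρ : 0 < ρ) (hm : dist m z ≤ ρ) :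
    ⨍ w in ball m ρ, (∫ s in (0 : ℝ)..1, g (homothety z s w)) ∂μ ≤
      2 ^ finrank ℝ E * localMaximalFunction μ (2 * ρ) g z := by
  have : Fact (μ (ball m ρ) < ⊤) := ⟨measure_ball_lt_top⟩
  have : NeZero (μ (ball m ρ)) := ⟨(measure_ball_pos μ m hρ).ne'⟩
  have hG : Integrable (Function.uncurry fun w (s : ℝ) => g (homothety z s w))
      ((μ.restrict (ball m ρ)).prod (volume.restrict (Ioc 0 1))) := by
    rw [Measure.prod_restrict]
    refine ContinuousOn.integrableOn_compact ((isCompact_closedBall m ρ).prod isCompact_Icc) ?_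
      |>.mono_set (prod_mono ball_subset_closedBall Ioc_subset_Icc_self)
    exact (hg.comp (by simp only [homothety_eq_lineMap]; fun_prop)).continuousOn
  have hbound : ∀ s ∈ uIoc (0 : ℝ) 1,
      ‖⨍ w in ball m ρ, g (homothety z s w) ∂μ‖ ≤
        2 ^ finrank ℝ E * localMaximalFunction μ (2 * ρ) g z := by
    intro s hs
    rw [uIoc_of_le zero_le_one] at hs
    rw [Real.norm_of_nonneg
      (by rw [average_eq']; exact integral_nonneg fun w => hg0 (homothety z s w))]
    exact setAverage_comp_homothety_le_localMaximalFunction hg hg0 hρ hm hs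
  rw [average_intervalIntegral_comm zero_le_one hG]
  simpa using (le_abs_self _).trans (intervalIntegral.norm_integral_le_of_norm_le_const hbound)

theorem norm_sub_setAverage_ball_le {F : Type*} [NormedAddCommGroup F] [NormedSpace ℝ F]
    [CompleteSpace F] {f : E → F} (hf : ContDiff ℝ 1 f) {z m : E} {ρ : ℝ} (hρ : 0 < ρ)
    (hm : dist m z ≤ ρ) :
    ‖f z - ⨍ w in ball m ρ, f w ∂μ‖ ≤
      2 ^ finrank ℝ E * (2 * ρ) *
        localMaximalFunction μ (2 * ρ) (fun w => ‖fderiv ℝ f w‖) z := by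
  set g : E → ℝ := fun w => ‖fderiv ℝ f w‖
  have hg : Continuous g := (hf.continuous_fderiv one_ne_zero).norm
  have hg0 : 0 ≤ g := fun w => norm_nonneg _
  have : Fact (μ (ball m ρ) < ⊤) := ⟨measure_ball_lt_top⟩
  have : NeZero (μ (ball m ρ)) := ⟨(measure_ball_pos μ m hρ).ne'⟩
  have hsegment : ∀ w ∈ ball m ρ,
      ‖f z - f w‖ ≤ 2 * ρ * ∫ s in (0 : ℝ)..1, g (homothety z s w) := by
    intro w hw
    have hwz : ‖w - z‖ ≤ 2 * ρ := by
      rw [← dist_eq_norm]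
      linarith [dist_triangle w m z, mem_ball.1 hw]
    rw [norm_sub_rev, mul_comm]
    exact (norm_sub_le_integral_norm_fderiv_mul hf z w).trans (mul_le_mul_of_nonneg_left hwz
      (intervalIntegral.integral_nonneg zero_le_one fun s _ => hg0 _))
  have hΦ : Continuous fun w => ∫ s in (0 : ℝ)..1, g (homothety z s w) :=
    intervalIntegral.continuous_parametric_intervalIntegral_of_continuous'
      (show Continuous fun p : E × ℝ => g (homothety z p.2 p.1) from
        hg.comp (by simp only [homothety_eq_lineMap]; fun_prop)) 0 1
  calc ‖f z - ⨍ w in ball m ρ, f w ∂μ‖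
      ≤ ⨍ w in ball m ρ, ‖f z - f w‖ ∂μ :=
        norm_sub_average_le (hf.continuous.continuousOn.integrableOn_compact
          (isCompact_closedBall m ρ) |>.mono_set ball_subset_closedBall) _
    _ ≤ ⨍ w in ball m ρ, (2 * ρ * ∫ s in (0 : ℝ)..1, g (homothety z s w)) ∂μ :=
        average_mono_of_nonneg (.of_forall fun w => norm_nonneg _)
          ((continuous_const.mul hΦ).continuousOn.integrableOn_compact
            (isCompact_closedBall m ρ) |>.mono_set ball_subset_closedBall)
          (ae_restrict_of_forall_mem measurableSet_ball hsegment)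
    _ = 2 * ρ * ⨍ w in ball m ρ, (∫ s in (0 : ℝ)..1, g (homothety z s w)) ∂μ := by
        rw [average_eq', integral_const_mul, ← average_eq']
    _ ≤ 2 * ρ * (2 ^ finrank ℝ E * localMaximalFunction μ (2 * ρ) g z) := by
        gcongr
        exact setAverage_intervalIntegral_comp_homothety_le_localMaximalFunction hg hg0 hρ hm
    _ = _ := by ring

theorem norm_sub_le_two_pow_mul_dist_mul_localMaximalFunction {F : Type*} [NormedAddCommGroup F]
    [NormedSpace ℝ F] [CompleteSpace F] {f : E → F} (hf : ContDiff ℝ 1 f) {x y : E}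
    (hxy : x ≠ y) :
    ‖f x - f y‖ ≤ 2 ^ finrank ℝ E * dist x y *
      (localMaximalFunction μ (dist x y) (fun w => ‖fderiv ℝ f w‖) x +
        localMaximalFunction μ (dist x y) (fun w => ‖fderiv ℝ f w‖) y) := by
  have hρ : 0 < dist x y / 2 := half_pos (dist_pos.2 hxy)
  have hdiam : 2 * (dist x y / 2) = dist x y := by ring
  have hmx : dist (midpoint ℝ x y) x = dist x y / 2 := by
    rw [dist_midpoint_left, Real.norm_two, inv_mul_eq_div]
  have hmy : dist (midpoint ℝ x y) y = dist x y / 2 := by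
    rw [dist_midpoint_right, Real.norm_two, inv_mul_eq_div]
  have hx := norm_sub_setAverage_ball_le (μ := μ) hf hρ hmx.le
  have hy := norm_sub_setAverage_ball_le (μ := μ) hf hρ hmy.le
  rw [hdiam] at hx hy
  calc ‖f x - f y‖ ≤ ‖f x - ⨍ w in ball (midpoint ℝ x y) (dist x y / 2), f w ∂μ‖ +
        ‖f y - ⨍ w in ball (midpoint ℝ x y) (dist x y / 2), f w ∂μ‖ := by
          simpa only [dist_eq_norm] using dist_triangle_right (f x) (f y) _
    _ ≤ _ := add_le_add hx hy
    _ = _ := by ring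

end AddHaar

theorem norm_gradient {F : Type*} [NormedAddCommGroup F] [InnerProductSpace ℝ F] [CompleteSpace F]
    (f : F → ℝ) (x : F) : ‖gradient f x‖ = ‖fderiv ℝ f x‖ :=
  (InnerProductSpace.toDual ℝ F).symm.norm_map _

theorem stmt0_general (n : ℕ) (f : EuclideanSpace ℝ (Fin n) → ℝ)
    (hf : ContDiff ℝ 1 f) :
    ∃ C : ℝ, ∀ x y : EuclideanSpace ℝ (Fin n), x ≠ y →
      |f x - f y| ≤ C * dist x y *
        ((⨆ t ∈ Set.Ioc (0 : ℝ) (dist x y), ⨍ w in ball x t, ‖gradient f w‖ ∂volume) +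
         (⨆ t ∈ Set.Ioc (0 : ℝ) (dist x y), ⨍ w in ball y t, ‖gradient f w‖ ∂volume)) := by
  refine ⟨2 ^ n, fun x y hxy => ?_⟩
  have h := norm_sub_le_two_pow_mul_dist_mul_localMaximalFunction (μ := volume) hf hxy
  rw [finrank_euclideanSpace_fin] at h
  simpa only [localMaximalFunction, Real.norm_eq_abs, norm_gradient] using h

/-- For `f : ℝⁿ → ℝ` continuously differentiable, there is `C = C(n)` such
that for all distinct `x y`, with `δ = |x - y|`,
`|f x - f y| ≤ C * |x - y| * (M_δ(|∇f|)(x) + M_δ(|∇f|)(y))`, where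
`M_δ g z = ⨆ (0 < t ≤ δ), ⨍_{B(z,t)} |g|`. -/
theorem stmt0 (n : ℕ) (hn : 1 ≤ n) (f : EuclideanSpace ℝ (Fin n) → ℝ)
    (hf : ContDiff ℝ 1 f) :
    ∃ C : ℝ, ∀ x y : EuclideanSpace ℝ (Fin n), x ≠ y →
      |f x - f y| ≤ C * dist x y *
        ((⨆ t ∈ Set.Ioc (0 : ℝ) (dist x y), ⨍ w in ball x t, ‖gradient f w‖ ∂volume) +
         (⨆ t ∈ Set.Ioc (0 : ℝ) (dist x y), ⨍ w in ball y t, ‖gradient f w‖ ∂volume)) :=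
  stmt0_general n f hf
end

section
/- Let n ≥ 1, l ≥ 1, and let f : ℝⁿ → ℝ be of class C^l. Then for all x, h ∈ ℝⁿ, the l-th finite difference of f satisfies ∑_{j=0}^{l} (−1)^{l−j} (l choose j) f(x + j·h) = ∫_{[0,1]^l} D^l f(x + (t₁ + ⋯ + t_l)·h)(h, …, h) dt₁ ⋯ dt_l, where D^l f(z)(h,…,h) denotes the l-th (Fréchet) derivative of f at z evaluated on l copies of h. -/
/-!
Along the line `s ↦ x + s • h` the claim becomes the one-variable identity
`Δ₁^l g a = ∫_{[0,1]^l} g⁽ˡ⁾ (a + t₁ + ⋯ + t_l) dt`, proved by induction on `l`: writing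
`Δ₁^(l+1) g a = Δ₁^l g (a + 1) - Δ₁^l g a`, the induction hypothesis turns this into a cube
integral of `g⁽ˡ⁾ (y + 1) - g⁽ˡ⁾ y = ∫₀¹ g⁽ˡ⁺¹⁾ (y + u) du`, and Fubini absorbs the new
variable `u` into an `(l+1)`-dimensional cube.
-/

open MeasureTheory Set fwdDiff

variable {E F : Type*} [NormedAddCommGroup E] [NormedAddCommGroup F]

theorem iteratedDeriv_comp_add_smul {𝕜 : Type*} [NontriviallyNormedField 𝕜]
    [NormedSpace 𝕜 E] [NormedSpace 𝕜 F] {f : E → F} {n : ℕ} (hf : ContDiff 𝕜 n f) (x y : E) :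
    iteratedDeriv n (fun s : 𝕜 => f (x + s • y))
      = fun t => iteratedFDeriv 𝕜 n f (x + t • y) (fun _ => y) := by
  induction n with
  | zero => ext t; simp
  | succ n ih =>
    ext t
    rw [iteratedDeriv_succ, ih hf.of_succ]
    exact hf.contDiffAt.deriv_fderiv_add_smul

theorem setIntegral_Icc_pi_eq_setIntegral_cons [NormedSpace ℝ F] {n : ℕ}
    {g : (Fin (n + 1) → ℝ) → F} {a b : Fin (n + 1) → ℝ} (hg : IntegrableOn g (Icc a b)) :
    ∫ t in Icc a b, g t
      = ∫ u in Icc (a 0) (b 0), ∫ s in Icc (Fin.tail a) (Fin.tail b), g (Fin.cons u s) := by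
  set e : ℝ × (Fin n → ℝ) ≃ᵐ (Fin (n + 1) → ℝ) :=
    (MeasurableEquiv.piFinSuccAbove (fun _ => ℝ) 0).symm
  have he : MeasurePreserving e :=
    (volume_preserving_piFinSuccAbove (fun _ : Fin (n + 1) => ℝ) 0).symm _
  have hpre : e ⁻¹' Icc a b = Icc (a 0) (b 0) ×ˢ Icc (Fin.tail a) (Fin.tail b) :=
    ((Fin.insertNthOrderIso (fun _ => ℝ) 0).preimage_Icc a b).trans (Icc_prod_eq _ _)
  rw [← he.map_eq, setIntegral_map_equiv, hpre, Measure.volume_eq_prod, setIntegral_prod]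
  · simp [e, Fin.insertNthEquiv]
  · rw [← hpre, ← Measure.volume_eq_prod]
    exact (he.integrableOn_comp_preimage e.measurableEmbedding).2 hg

theorem add_one_sub_eq_setIntegral_deriv [NormedSpace ℝ F] [CompleteSpace F] {φ : ℝ → F}
    (hφ : ContDiff ℝ 1 φ) (y : ℝ) :
    φ (y + 1) - φ y = ∫ u in Icc (0 : ℝ) 1, deriv φ (y + u) := by
  rw [integral_Icc_eq_integral_Ioc, ← intervalIntegral.integral_of_le zero_le_one,
    intervalIntegral.integral_comp_add_left (deriv φ), add_zero,
    intervalIntegral.integral_deriv_eq_sub (fun z _ => hφ.differentiable one_ne_zero z)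
      ((hφ.continuous_deriv le_rfl).intervalIntegrable _ _)]

theorem fwdDiff_iter_eq_setIntegral_iteratedDeriv [NormedSpace ℝ F] [CompleteSpace F]
    {l : ℕ} {g : ℝ → F} (hg : ContDiff ℝ l g) (a : ℝ) :
    (Δ_[(1 : ℝ)])^[l] g a = ∫ t in Icc (0 : Fin l → ℝ) 1, iteratedDeriv l g (a + ∑ i, t i) := by
  induction l generalizing a with
  | zero => simp [Measure.real, Real.volume_Icc_pi]
  | succ l ih =>
    have hcont : Continuous (iteratedDeriv (l + 1) g) := hg.continuous_iteratedDeriv' _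
    have hderiv : ContDiff ℝ 1 (iteratedDeriv l g) := by
      rw [iteratedDeriv_eq_iterate]
      exact ContDiff.iterate_deriv' 1 l (by rwa [add_comm])
    have hcube (b : ℝ) : IntegrableOn (fun t : Fin l → ℝ => iteratedDeriv l g (b + ∑ i, t i))
        (Icc 0 1) :=
      ((hg.of_succ.continuous_iteratedDeriv' l).comp (by fun_prop)).integrableOn_Icc
    have hswap : Integrable (Function.uncurry fun (t : Fin l → ℝ) (u : ℝ) =>
        iteratedDeriv (l + 1) g (a + ∑ i, t i + u))
        ((volume.restrict (Icc (0 : Fin l → ℝ) 1)).prod (volume.restrict (Icc (0 : ℝ) 1))) := by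
      rw [Measure.prod_restrict, ← Measure.volume_eq_prod]
      exact (hcont.comp (f := fun p : (Fin l → ℝ) × ℝ => a + ∑ i, p.1 i + p.2)
        (by fun_prop)).continuousOn.integrableOn_compact (isCompact_Icc.prod isCompact_Icc)
    calc (Δ_[(1 : ℝ)])^[l + 1] g a = (Δ_[(1 : ℝ)])^[l] g (a + 1) - (Δ_[(1 : ℝ)])^[l] g a := by
          rw [Function.iterate_succ_apply']; rfl
      _ = ∫ t in Icc (0 : Fin l → ℝ) 1,
            (iteratedDeriv l g (a + ∑ i, t i + 1) - iteratedDeriv l g (a + ∑ i, t i)) := by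
          rw [ih hg.of_succ, ih hg.of_succ, ← integral_sub (hcube _) (hcube _)]
          simp only [add_right_comm]
      _ = ∫ t in Icc (0 : Fin l → ℝ) 1, ∫ u in Icc (0 : ℝ) 1,
            iteratedDeriv (l + 1) g (a + ∑ i, t i + u) := by
          refine setIntegral_congr_fun measurableSet_Icc fun t _ => ?_
          rw [add_one_sub_eq_setIntegral_deriv hderiv, iteratedDeriv_succ]
      _ = ∫ u in Icc (0 : ℝ) 1, ∫ t in Icc (0 : Fin l → ℝ) 1,
            iteratedDeriv (l + 1) g (a + (u + ∑ i, t i)) := by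
          rw [integral_integral_swap hswap]
          refine setIntegral_congr_fun measurableSet_Icc fun u _ =>
            setIntegral_congr_fun measurableSet_Icc fun t _ => ?_
          simp only [add_assoc, add_comm u]
      _ = ∫ t in Icc (0 : Fin (l + 1) → ℝ) 1, iteratedDeriv (l + 1) g (a + ∑ i, t i) := by
          rw [setIntegral_Icc_pi_eq_setIntegral_cons (g := fun t : Fin (l + 1) → ℝ =>
            iteratedDeriv (l + 1) g (a + ∑ i, t i)) ((hcont.comp (by fun_prop)).integrableOn_Icc)]
          simp only [Pi.zero_apply, Pi.one_apply, Fin.sum_univ_succ, Fin.cons_zero, Fin.cons_succ]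
          rfl

theorem stmt4_general (n l : ℕ)
    (f : EuclideanSpace ℝ (Fin n) → ℝ) (hf : ContDiff ℝ l f)
    (x h : EuclideanSpace ℝ (Fin n)) :
    ∑ j ∈ Finset.range (l + 1), (-1 : ℝ) ^ (l - j) * (l.choose j) * f (x + (j : ℝ) • h)
      = ∫ t in Set.Icc (0 : Fin l → ℝ) 1,
          iteratedFDeriv ℝ l f (x + (∑ i, t i) • h) (fun _ => h) := by
  have hline : ContDiff ℝ l (fun s : ℝ => f (x + s • h)) := hf.comp (by fun_prop)
  calc _ = (Δ_[(1 : ℝ)])^[l] (fun s : ℝ => f (x + s • h)) 0 := by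
        simp [fwdDiff_iter_eq_sum_shift]
    _ = _ := by
        rw [fwdDiff_iter_eq_setIntegral_iteratedDeriv hline, iteratedDeriv_comp_add_smul hf]
        simp

/-- For `f : ℝⁿ → ℝ` of class `C^l` (`l ≥ 1`) and all `x h`,
`∑_{j=0}^{l} (−1)^{l−j} (l choose j) f(x + j·h)
  = ∫_{[0,1]^l} D^l f(x + (t₁+⋯+t_l)·h)(h,…,h) dt`. -/
theorem stmt4 (n l : ℕ) (hn : 1 ≤ n) (hl : 1 ≤ l)
    (f : EuclideanSpace ℝ (Fin n) → ℝ) (hf : ContDiff ℝ l f)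
    (x h : EuclideanSpace ℝ (Fin n)) :
    ∑ j ∈ Finset.range (l + 1), (-1 : ℝ) ^ (l - j) * (l.choose j) * f (x + (j : ℝ) • h)
      = ∫ t in Set.Icc (0 : Fin l → ℝ) 1,
          iteratedFDeriv ℝ l f (x + (∑ i, t i) • h) (fun _ => h) :=
  stmt4_general n l f hf x h
end

section
/- Let n ≥ 1, and let k ≥ l ≥ 0 be integers. Let f : ℝⁿ → ℝ be of class C^k and fix h ∈ ℝⁿ. Then the function g_h^l : ℝⁿ → ℝ defined by g_h^l(x) = ∫_{[0,1]^l} D^l f(x + (t₁ + ⋯ + t_l)·h)(h, …, h) dt₁ ⋯ dt_l is of class C^{k−l}. -/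
/-!
Write `D(y) = D^l f(y)(h, …, h)`, a `C^{k-l}` function. Then `g_h^l(x) = ∫ D(x - y) dν(y)` where
`ν` is the image of Lebesgue measure on `[0,1]^l` under `t ↦ -(t₁ + ⋯ + t_l) h`: a finite measure
with compact support. Near any point `x₀` one may replace `D` by `b D` for a smooth bump `b` equal
to `1` on a large ball around `x₀`, so that locally `g_h^l` is the convolution of the constant `1`
with a compactly supported `C^{k-l}` function, hence `C^{k-l}`.
-/

open MeasureTheory

section IntegralOfTranslates

variable {E F : Type*} [NormedAddCommGroup E] [NormedSpace ℝ E] [FiniteDimensional ℝ E]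
  [MeasurableSpace E] [BorelSpace E] [NormedAddCommGroup F] [NormedSpace ℝ F]
  {m : ℕ∞} {g : E → F}

open scoped Convolution in
theorem ContDiff.integral_comp_sub (hg : ContDiff ℝ m g)
    {ν : Measure E} [IsFiniteMeasure ν] {K : Set E} (hK : IsCompact K)
    (hνK : ∀ᵐ y ∂ν, y ∈ K) :
    ContDiff ℝ m (fun x => ∫ y, g (x - y) ∂ν) := by
  obtain ⟨R, hR, hKR⟩ := hK.isBounded.subset_closedBall_lt 0 0
  refine contDiff_iff_contDiffAt.2 fun x₀ => ?_
  -- Cut `g` off far from `x₀`: near `x₀` only the values of `g` on `x₀ - K + ball 0 1` matter.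
  let b : ContDiffBump x₀ := ⟨R + 1, R + 2, by positivity, by linarith⟩
  have hconv : ContDiff ℝ m
      ((fun _ => (1 : ℝ)) ⋆[ContinuousLinearMap.lsmul ℝ ℝ, ν] fun y => b y • g y) :=
    b.hasCompactSupport.smul_right.contDiff_convolution_right _ (locallyIntegrable_const 1)
      (b.contDiff.smul hg)
  refine hconv.contDiffAt.congr_of_eventuallyEq ?_
  filter_upwards [Metric.ball_mem_nhds x₀ one_pos] with x hx
  rw [convolution_def]
  refine integral_congr_ae ?_
  filter_upwards [hνK] with y hy
  have hxy : x - y ∈ Metric.closedBall x₀ (R + 1) := by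
    have hy' : ‖y‖ ≤ R := by simpa using hKR hy
    have hx' : ‖x - x₀‖ < 1 := by simpa [dist_eq_norm] using hx
    rw [Metric.mem_closedBall, dist_eq_norm, sub_right_comm]
    linarith [norm_sub_le (x - x₀) y]
  simp [b.one_of_mem_closedBall hxy]

theorem ContDiff.integral_comp_add {α : Type*} [MeasurableSpace α] (hg : ContDiff ℝ m g)
    {μ : Measure α} [IsFiniteMeasure μ] {φ : α → E} (hφ : AEMeasurable φ μ) {K : Set E}
    (hK : IsCompact K) (hφK : ∀ᵐ t ∂μ, φ t ∈ K) :
    ContDiff ℝ m (fun x => ∫ t, g (x + φ t) ∂μ) := by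
  have hνK : ∀ᵐ y ∂μ.map (-φ), y ∈ -K := by
    refine (ae_map_iff hφ.neg hK.neg.isClosed.measurableSet).2 ?_
    exact hφK.mono fun t ht => Set.neg_mem_neg.2 ht
  convert hg.integral_comp_sub hK.neg hνK using 1
  funext x
  have hgx : Continuous fun y => g (x - y) := hg.continuous.comp (continuous_sub_left x)
  rw [integral_map hφ.neg hgx.aestronglyMeasurable]
  simp [sub_eq_add_neg]

end IntegralOfTranslates

theorem stmt12_general (n k l : ℕ) (hlk : l ≤ k)
    (f : EuclideanSpace ℝ (Fin n) → ℝ) (hf : ContDiff ℝ k f)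
    (h : EuclideanSpace ℝ (Fin n)) :
    ContDiff ℝ (k - l : ℕ) (fun x : EuclideanSpace ℝ (Fin n) =>
      ∫ t in Set.Icc (0 : Fin l → ℝ) 1,
        iteratedFDeriv ℝ l f (x + (∑ i, t i) • h) (fun _ => h)) := by
  have hDf : ContDiff ℝ (k - l : ℕ) (fun y => iteratedFDeriv ℝ l f y (fun _ => h)) :=
    (ContinuousMultilinearMap.apply ℝ _ ℝ (fun _ => h)).contDiff.comp
      (hf.iteratedFDeriv_right (by norm_cast; omega))
  have hφ : Continuous fun t : Fin l → ℝ => (∑ i, t i) • h := by fun_prop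
  have : IsFiniteMeasure (volume.restrict (Set.Icc (0 : Fin l → ℝ) 1)) :=
    isFiniteMeasure_restrict.2 isCompact_Icc.measure_ne_top
  exact hDf.integral_comp_add hφ.aemeasurable (isCompact_Icc.image hφ)
    ((ae_restrict_mem measurableSet_Icc).mono fun t ht => Set.mem_image_of_mem _ ht)

/-- For `f : ℝⁿ → ℝ` of class `C^k`, `k ≥ l ≥ 0`, and fixed `h`, the
function `g_h^l(x) = ∫_{[0,1]^l} D^l f(x + (t₁+⋯+t_l)·h)(h,…,h) dt` is of class
`C^{k−l}`. -/
theorem stmt12 (n k l : ℕ) (hn : 1 ≤ n) (hlk : l ≤ k)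
    (f : EuclideanSpace ℝ (Fin n) → ℝ) (hf : ContDiff ℝ k f)
    (h : EuclideanSpace ℝ (Fin n)) :
    ContDiff ℝ (k - l : ℕ) (fun x : EuclideanSpace ℝ (Fin n) =>
      ∫ t in Set.Icc (0 : Fin l → ℝ) 1,
        iteratedFDeriv ℝ l f (x + (∑ i, t i) • h) (fun _ => h)) :=
  stmt12_general n k l hlk f hf h
end
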